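/- In the canonical model built from a maximal consistent set z (with domain Δ the R-equivalence class of z and x ≺_w y iff there exists a formula B ∈ y such that for all formulas A ∈ x, (A ⇇ B) ∈ w), each relation ≺_w is centered (for all x,y ∈ Δ with x ≠ y, x ≺_x y) and modular (if x ≺_w y and u ∈ Δ, then x ≺_w u or u ≺_w y). -/

import Mathlib

/-- Formulas of the language L_CSL: propositional variables, ⊥, negation,
conjunction, and the comparative similarity connective `cls` (A ⇇ B). -/
inductive CSLForm : Type
  | var : ℕ → CSLForm
  | bot : CSLForm
  | neg : CSLForm → CSLForm
  | and : CSLForm → CSLForm → CSLForm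
  | cls : CSLForm → CSLForm → CSLForm

namespace CSLForm

def top : CSLForm := neg bot
def or (A B : CSLForm) : CSLForm := neg (and (neg A) (neg B))
def imp (A B : CSLForm) : CSLForm := or (neg A) B

end CSLForm

/-- A boolean valuation respecting the classical connectives
(⇇-formulas and variables are treated as atoms). -/
def IsBoolVal (v : CSLForm → Bool) : Prop :=
  v .bot = false ∧ (∀ A, v (.neg A) = !v A) ∧ (∀ A B, v (.and A B) = (v A && v B))

/-- Classical tautologies of L_CSL. -/
def CSLTautology (A : CSLForm) : Prop := ∀ v, IsBoolVal v → v A = true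

/-- The Hilbert system CSMS. -/
inductive CSMS : CSLForm → Prop
  | taut {A : CSLForm} : CSLTautology A → CSMS A
  | mp {A B : CSLForm} : CSMS (A.imp B) → CSMS A → CSMS B
  | mon {A B : CSLForm} (C : CSLForm) : CSMS (A.imp B) → CSMS ((A.cls C).imp (B.cls C))
  | ax1 (A B : CSLForm) : CSMS ((A.cls B).neg.or (B.cls A).neg)
  | ax2 (A B C : CSLForm) : CSMS ((A.cls B).imp ((A.cls C).or (C.cls B)))
  | ax3 (A B : CSLForm) : CSMS ((A.and B.neg).imp (A.cls B))
  | ax4 (A B : CSLForm) : CSMS ((A.cls B).imp B.neg)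
  | ax5 (A B C : CSLForm) : CSMS (((A.cls B).and (A.cls C)).imp (A.cls (B.or C)))
  | ax6 (A : CSLForm) : CSMS ((A.cls .bot).imp (((A.cls .bot).neg.cls .bot).neg))

/-- Semantic extension of a formula, given preferential relations
`pref w x y` (meaning x ≺_w y) and a valuation of propositional variables. -/
def prefEval {W : Type} (pref : W → W → W → Prop) (val : ℕ → Set W) :
    CSLForm → Set W
  | .var i => val i
  | .bot => ∅
  | .neg A => (prefEval pref val A)ᶜ
  | .and A B => prefEval pref val A ∩ prefEval pref val B
  | .cls A B =>
      {w | ∃ x ∈ prefEval pref val A, ∀ y ∈ prefEval pref val B, pref w x y}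

/-- A CSL-preferential model. -/
structure CSLPrefModel (W : Type) where
  ne : Nonempty W
  pref : W → W → W → Prop
  modular : ∀ w x y z, pref w x y → pref w z y ∨ pref w x z
  centered : ∀ w x, x = w ∨ pref w w x
  limit : ∀ w (X : Set W), X.Nonempty → {y ∈ X | ∀ z, pref w z y → z ∉ X}.Nonempty
  val : ℕ → Set W

def CSLPrefModel.eval {W : Type} (M : CSLPrefModel W) : CSLForm → Set W :=
  prefEval M.pref M.val

/-- Distance from a point to a set, in ℝ≥0∞ (so that it is ∞ on the empty set). -/
noncomputable def setDist {W : Type} (d : W → W → ℝ) (w : W) (X : Set W) : ENNReal :=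
  ⨅ x ∈ X, ENNReal.ofReal (d w x)

/-- A CSL-distance minspace model. -/
structure CSLMinModel (W : Type) where
  ne : Nonempty W
  dist : W → W → ℝ
  dist_nonneg : ∀ x y, 0 ≤ dist x y
  dist_eq_zero : ∀ x y, dist x y = 0 ↔ x = y
  min_attained : ∀ (w : W) (X : Set W), X.Nonempty → ∃ x ∈ X, ∀ y ∈ X, dist w x ≤ dist w y
  val : ℕ → Set W

noncomputable def CSLMinModel.eval {W : Type} (M : CSLMinModel W) : CSLForm → Set W
  | .var i => M.val i
  | .bot => ∅
  | .neg A => (M.eval A)ᶜ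
  | .and A B => M.eval A ∩ M.eval B
  | .cls A B => {w | setDist M.dist w (M.eval A) < setDist M.dist w (M.eval B)}

/-- Iterated disjunction of a list of formulas. -/
def bigOr : List CSLForm → CSLForm
  | [] => .bot
  | [A] => A
  | A :: B :: rest => A.or (bigOr (B :: rest))

/-- Iterated conjunction of a list of formulas. -/
def bigAnd : List CSLForm → CSLForm
  | [] => .top
  | [A] => A
  | A :: B :: rest => A.and (bigAnd (B :: rest))

/-- Γ is inconsistent wrt CSMS: there are A₁,…,Aₙ ∈ Γ (n ≥ 1) with ⊢ ¬A₁ ⊔ … ⊔ ¬Aₙ. -/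
def Inconsistent (Γ : Set CSLForm) : Prop :=
  ∃ L : List CSLForm, L ≠ [] ∧ (∀ A ∈ L, A ∈ Γ) ∧ CSMS (bigOr (L.map .neg))

def Consistent (Γ : Set CSLForm) : Prop := ¬ Inconsistent Γ

def MaxConsistent (Γ : Set CSLForm) : Prop :=
  Consistent Γ ∧ ∀ A, A ∉ Γ → Inconsistent (insert A Γ)

/-- w^A = {¬B | (A ⇇ B) ∈ w}. -/
def projSet (w : Set CSLForm) (A : CSLForm) : Set CSLForm :=
  {F | ∃ B, F = CSLForm.neg B ∧ (A.cls B) ∈ w}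

/-- R(x,y) iff every A ∈ y satisfies (A ⇇ ⊥) ∈ x. -/
def Rrel (x y : Set CSLForm) : Prop := ∀ A, A ∈ y → (A.cls .bot) ∈ x

/-- The canonical preferential relation: x ≺_w y iff
∃ B ∈ y such that ∀ A ∈ x, (A ⇇ B) ∈ w. -/
def canonPrec (w x y : Set CSLForm) : Prop :=
  ∃ B, B ∈ y ∧ ∀ A, A ∈ x → (A.cls B) ∈ w

/-!
Both properties are read off single axioms inside maximal consistent sets. Centering: if
`x ≠ y` then, maximal consistent sets being incomparable, some `B ∈ y` is missing from `x`;
then `¬B ∈ x`, and axiom (3) `A ⊓ ¬B → (A ⇇ B)` puts `A ⇇ B` in `x` for every `A ∈ x`.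
Modularity: given the witness `B ∈ y` of `x ≺_w y` and any `C ∈ v`, axiom (2) gives
`(A ⇇ C) ⊔ (C ⇇ B) ∈ w` for each `A ∈ x`; so either `C` witnesses `x ≺_w v`, or
`C ⇇ B ∈ w` for every `C ∈ v`, i.e. `B` witnesses `v ≺_w y`.

The only non-syntactic ingredient is the consistency of CSMS, needed because `Inconsistent`
asks for a nonempty list: CSMS is sound for the one-world model, where `A ⇇ B` means `A ⊓ ¬B`.
-/

namespace IsBoolVal

variable {v : CSLForm → Bool}

theorem apply_bot (hv : IsBoolVal v) : v .bot = false := hv.1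

theorem apply_neg (hv : IsBoolVal v) (A : CSLForm) : v A.neg = !v A := hv.2.1 A

theorem apply_and (hv : IsBoolVal v) (A B : CSLForm) : v (A.and B) = (v A && v B) := hv.2.2 A B

theorem apply_or (hv : IsBoolVal v) (A B : CSLForm) : v (A.or B) = (v A || v B) := by
  simp only [CSLForm.or, hv.apply_neg, hv.apply_and, Bool.not_and, Bool.not_not]

theorem apply_imp (hv : IsBoolVal v) (A B : CSLForm) : v (A.imp B) = (!v A || v B) := by
  rw [CSLForm.imp, hv.apply_or, hv.apply_neg]

theorem apply_bigAnd (hv : IsBoolVal v) : ∀ L : List CSLForm, v (bigAnd L) = L.all v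
  | [] => by simp [bigAnd, CSLForm.top, hv.apply_neg, hv.apply_bot]
  | [A] => by simp [bigAnd]
  | A :: B :: L => by simp only [bigAnd, hv.apply_and, hv.apply_bigAnd (B :: L), List.all_cons]

theorem apply_bigOr (hv : IsBoolVal v) : ∀ L : List CSLForm, v (bigOr L) = L.any v
  | [] => by simp [bigOr, hv.apply_bot]
  | [A] => by simp [bigOr]
  | A :: B :: L => by simp only [bigOr, hv.apply_or, hv.apply_bigOr (B :: L), List.any_cons]

theorem apply_bigOr_map_neg (hv : IsBoolVal v) (L : List CSLForm) :
    v (bigOr (L.map .neg)) = !L.all v := by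
  simp [hv.apply_bigOr, List.not_all_eq_any_not, Function.comp_def, hv.apply_neg]

end IsBoolVal

def oneWorldVal : CSLForm → Bool
  | .var _ => false
  | .bot => false
  | .neg A => !oneWorldVal A
  | .and A B => oneWorldVal A && oneWorldVal B
  | .cls A B => oneWorldVal A && !oneWorldVal B

theorem isBoolVal_oneWorldVal : IsBoolVal oneWorldVal := ⟨rfl, fun _ => rfl, fun _ _ => rfl⟩

theorem CSMS.oneWorldVal_eq_true {A : CSLForm} (h : CSMS A) : oneWorldVal A = true := by
  have hv := isBoolVal_oneWorldVal
  induction h with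
  | taut h => exact h _ hv
  | mp _ _ ihAB ihA => simpa [hv.apply_imp, ihA] using ihAB
  | mon _ _ ih =>
    simp only [hv.apply_imp, oneWorldVal] at ih ⊢
    grind
  | _ =>
    simp only [hv.apply_imp, hv.apply_or, oneWorldVal]
    grind

theorem CSMS.not_bot : ¬ CSMS .bot := fun h => by
  simpa [oneWorldVal] using h.oneWorldVal_eq_true

theorem tautology_bigOr_neg_imp_bigAnd_imp_neg {L K : List CSLForm} {A : CSLForm}
    (hLK : ∀ C ∈ L, C = A ∨ C ∈ K) :
    CSLTautology ((bigOr (L.map .neg)).imp ((bigAnd K).imp A.neg)) := by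
  intro v hv
  simp only [hv.apply_imp, hv.apply_bigOr_map_neg, hv.apply_bigAnd, hv.apply_neg]
  cases hA : v A
  · simp
  cases hK : K.all v
  · simp
  have hL : L.all v = true := List.all_eq_true.2 fun C hC =>
    (hLK C hC).elim (fun hCA => hCA ▸ hA) (List.all_eq_true.1 hK C)
  simp [hL]

theorem tautology_refute_append (L K : List CSLForm) (B : CSLForm) :
    CSLTautology (((bigAnd L).imp B).imp (((bigAnd K).imp B.neg).imp
      (bigOr ((L ++ K).map .neg)))) := by
  intro v hv
  simp only [hv.apply_imp, hv.apply_bigOr_map_neg, hv.apply_bigAnd, hv.apply_neg, List.all_append]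
  cases L.all v <;> cases K.all v <;> cases v B <;> rfl

theorem Consistent.not_provable_bigOr_neg {x : Set CSLForm} (hx : Consistent x)
    {L : List CSLForm} (hL : ∀ A ∈ L, A ∈ x) : ¬ CSMS (bigOr (L.map .neg)) := by
  intro h
  rcases eq_or_ne L [] with rfl | hne
  · exact CSMS.not_bot h
  · exact hx ⟨L, hne, hL, h⟩

namespace MaxConsistent

variable {x : Set CSLForm}

theorem exists_provable_neg_of_not_mem (hx : MaxConsistent x) {A : CSLForm} (hA : A ∉ x) :
    ∃ K : List CSLForm, (∀ C ∈ K, C ∈ x) ∧ CSMS ((bigAnd K).imp A.neg) := by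
  classical
  obtain ⟨L, -, hLx, hL⟩ := hx.2 A hA
  have hLK : ∀ C ∈ L, C = A ∨ C ∈ L.filter (· ≠ A) := fun C hC =>
    or_iff_not_imp_left.2 fun hCA => List.mem_filter.2 ⟨hC, by simpa⟩
  refine ⟨L.filter (· ≠ A), fun C hC => ?_,
    .mp (.taut (tautology_bigOr_neg_imp_bigAnd_imp_neg hLK)) hL⟩
  obtain ⟨hCL, hCA⟩ := List.mem_filter.1 hC
  exact (Set.mem_insert_iff.1 (hLx C hCL)).resolve_left (by simpa using hCA)

theorem mem_of_bigAnd_imp (hx : MaxConsistent x) {L : List CSLForm} (hL : ∀ A ∈ L, A ∈ x)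
    {B : CSLForm} (h : CSMS ((bigAnd L).imp B)) : B ∈ x := by
  by_contra hB
  obtain ⟨K, hKx, hK⟩ := hx.exists_provable_neg_of_not_mem hB
  refine hx.1.not_provable_bigOr_neg (L := L ++ K) ?_ (.mp (.mp (.taut ?_) h) hK)
  · simpa only [List.mem_append] using fun A hA => hA.elim (hL A) (hKx A)
  · exact tautology_refute_append L K B

theorem mem_of_imp (hx : MaxConsistent x) {A B : CSLForm} (hA : A ∈ x) (h : CSMS (A.imp B)) :
    B ∈ x :=
  hx.mem_of_bigAnd_imp (L := [A]) (by simpa) h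

theorem neg_mem_iff (hx : MaxConsistent x) {A : CSLForm} : A.neg ∈ x ↔ A ∉ x := by
  refine ⟨fun hnA hA => hx.1.not_provable_bigOr_neg (L := [A, A.neg]) (by simp [hA, hnA]) ?_,
    fun hA => ?_⟩
  · refine .taut fun v hv => ?_
    simp only [bigOr, List.map, hv.apply_or, hv.apply_neg]
    cases v A <;> rfl
  · obtain ⟨K, hKx, hK⟩ := hx.exists_provable_neg_of_not_mem hA
    exact hx.mem_of_bigAnd_imp hKx hK

theorem mem_or_mem_of_or_mem (hx : MaxConsistent x) {A B : CSLForm} (h : A.or B ∈ x) :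
    A ∈ x ∨ B ∈ x :=
  or_iff_not_imp_left.2 fun hA => hx.mem_of_bigAnd_imp (L := [A.or B, A.neg])
    (by simp [h, hx.neg_mem_iff.2 hA])
    (.taut fun v hv => by
      simp only [bigAnd, hv.apply_imp, hv.apply_and, hv.apply_or, hv.apply_neg]
      cases v A <;> cases v B <;> rfl)

theorem eq_of_subset {y : Set CSLForm} (hx : MaxConsistent x) (hy : MaxConsistent y)
    (hyx : y ⊆ x) : y = x :=
  hyx.antisymm fun _ hA => by_contra fun hAy => hx.neg_mem_iff.1 (hyx (hy.neg_mem_iff.2 hAy)) hA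

end MaxConsistent

theorem canonPrec_self_of_not_subset {x y : Set CSLForm} (hx : MaxConsistent x) (hyx : ¬ y ⊆ x) :
    canonPrec x x y := by
  obtain ⟨B, hBy, hBx⟩ := Set.not_subset.1 hyx
  exact ⟨B, hBy, fun A hA =>
    hx.mem_of_bigAnd_imp (L := [A, B.neg]) (by simp [hA, hx.neg_mem_iff.2 hBx]) (CSMS.ax3 A B)⟩

theorem canonPrec_modular {w x y v : Set CSLForm} (hw : MaxConsistent w) :
    canonPrec w x y → canonPrec w x v ∨ canonPrec w v y := by
  rintro ⟨B, hBy, hB⟩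
  refine or_iff_not_imp_left.2 fun hxv => ⟨B, hBy, fun C hC => ?_⟩
  obtain ⟨A, hAx, hAC⟩ : ∃ A ∈ x, A.cls C ∉ w := by
    by_contra! h
    exact hxv ⟨C, hC, h⟩
  exact (hw.mem_or_mem_of_or_mem (hw.mem_of_imp (hB A hAx) (CSMS.ax2 A B C))).resolve_left hAC

theorem canonical_centered_modular_general (z : Set CSLForm) :
    (∀ x ∈ {u : Set CSLForm | MaxConsistent u ∧ Rrel z u},
     ∀ y ∈ {u : Set CSLForm | MaxConsistent u ∧ Rrel z u},
       x ≠ y → canonPrec x x y) ∧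
    (∀ w ∈ {u : Set CSLForm | MaxConsistent u ∧ Rrel z u},
     ∀ x ∈ {u : Set CSLForm | MaxConsistent u ∧ Rrel z u},
     ∀ y ∈ {u : Set CSLForm | MaxConsistent u ∧ Rrel z u},
     ∀ v ∈ {u : Set CSLForm | MaxConsistent u ∧ Rrel z u},
       canonPrec w x y → canonPrec w x v ∨ canonPrec w v y) := by
  refine ⟨fun x hx y hy hxy => ?_, fun w hw _ _ _ _ _ _ => canonPrec_modular hw.1⟩
  exact canonPrec_self_of_not_subset hx.1 fun hyx => hxy (hx.1.eq_of_subset hy.1 hyx).symm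

/-- in the canonical model over a maximal consistent set z,
each relation ≺_w is centered and modular. -/
theorem canonical_centered_modular (z : Set CSLForm) (hz : MaxConsistent z) :
    (∀ x ∈ {u : Set CSLForm | MaxConsistent u ∧ Rrel z u},
     ∀ y ∈ {u : Set CSLForm | MaxConsistent u ∧ Rrel z u},
       x ≠ y → canonPrec x x y) ∧
    (∀ w ∈ {u : Set CSLForm | MaxConsistent u ∧ Rrel z u},
     ∀ x ∈ {u : Set CSLForm | MaxConsistent u ∧ Rrel z u},
     ∀ y ∈ {u : Set CSLForm | MaxConsistent u ∧ Rrel z u},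
     ∀ v ∈ {u : Set CSLForm | MaxConsistent u ∧ Rrel z u},
       canonPrec w x y → canonPrec w x v ∨ canonPrec w v y) :=
  canonical_centered_modular_general z
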